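/- Fix an odd integer l ≥ 3. For every N ≥ 1 and k ∈ {0,1,...,l-2}, |p(k,N) − ((1 + (-1)^{k+N})/l) · 2^{N+1} cos^N(π/l) sin(π/l) sin((k+1)π/l)| ≤ 2^N |cos(2π/l)|^N. -/

import Mathlib

/-! The vectors `(sin (s * m * π / l))_{s < l}`, `0 < m < l`, are orthogonal of squared norm `l / 2`
(discrete sine transform), and they diagonalise the path-counting recursion defining `p` with
eigenvalues `2 cos (s * π / l)`. Hence `p(k,N)` equals
`2 ^ (N + 1) / l * ∑ s < l, cos (s * π / l) ^ N * sin (s * π / l) * sin (s * (k + 1) * π / l)`.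
There the terms `s = 1` and `s = l - 1` agree up to the sign `(-1) ^ (k + N)` and give the main
term; every other term has `|cos (s * π / l)| ≤ |cos (2 * π / l)|`, so by AM-GM and orthogonality
once more the remainder is at most `2 ^ N * |cos (2 * π / l)| ^ N`. -/

/-- The tilting multiplicity `p(k,N)`, defined by the recursion `p(k,0) = [k = 0]`,
`p(k,N) = p(k-1,N-1) + p(k+1,N-1)` for `0 ≤ k ≤ l-3`, `p(l-2,N) = p(l-3,N-1)`,
with the convention `p(-1,·) = 0`. -/
def p (l : ℕ) : ℕ → ℕ → ℕ
  | 0, k => if k = 0 then 1 else 0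
  | N + 1, k =>
    if k + 2 = l then (if 3 ≤ l then p l N (l - 3) else 0)
    else if k = 0 then p l N 1
    else p l N (k - 1) + p l N (k + 1)

open Real Finset

lemma two_mul_sin_half_mul_sum_range_cos (x : ℝ) (n : ℕ) :
    2 * sin (x / 2) * ∑ s ∈ range n, cos (s * x) = sin ((2 * n - 1) * x / 2) + sin (x / 2) := by
  induction n with
  | zero => simp [neg_div]
  | succ n ih =>
    have h₁ : (2 * ((n + 1 : ℕ) : ℝ) - 1) * x / 2 = n * x + x / 2 := by push_cast; ring
    have h₂ : (2 * (n : ℝ) - 1) * x / 2 = n * x - x / 2 := by ring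
    rw [sum_range_succ, mul_add, ih, h₁, h₂, sin_add, sin_sub]
    ring

lemma sum_range_cos_mul_pi_div (l j : ℕ) (hj : 0 < j) (hjl : j < 2 * l) :
    ∑ s ∈ range l, cos (s * j * π / l) = (1 - (-1) ^ j) / 2 := by
  have hl : (0 : ℝ) < l := by exact_mod_cast (by omega : 0 < l)
  set x := j * π / l
  have hsin : 0 < sin (x / 2) := by
    have : (j : ℝ) < 2 * l := by exact_mod_cast hjl
    apply sin_pos_of_pos_of_lt_pi (by positivity)
    rw [div_div, div_lt_iff₀ (by positivity)]
    nlinarith [pi_pos]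
  have key := two_mul_sin_half_mul_sum_range_cos x l
  have harg : (2 * (l : ℝ) - 1) * x / 2 = j * π - x / 2 := by simp only [x]; field_simp
  rw [harg, sin_nat_mul_pi_sub] at key
  have hsum : ∑ s ∈ range l, cos (s * j * π / l) = ∑ s ∈ range l, cos (s * x) := by
    simp only [x, mul_div_assoc, mul_assoc]
  rw [hsum]
  apply mul_left_cancel₀ (mul_ne_zero two_ne_zero hsin.ne')
  rw [key]
  ring

lemma sum_range_sin_mul_sin (l a b : ℕ) (ha : 0 < a) (hal : a < l) (hb : 0 < b) (hbl : b < l) :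
    ∑ s ∈ range l, sin (s * a * π / l) * sin (s * b * π / l) = if a = b then (l : ℝ) / 2 else 0 := by
  wlog hba : b ≤ a generalizing a b
  · simp_rw [mul_comm (sin (_ * a * π / l)), eq_comm (a := a)]
    exact this b a hb hbl ha hal (by omega)
  obtain ⟨d, rfl⟩ := Nat.exists_eq_add_of_le hba
  have hprod : ∀ s : ℕ, sin (s * (b + d : ℕ) * π / l) * sin (s * b * π / l)
      = (cos (s * d * π / l) - cos (s * (2 * b + d : ℕ) * π / l)) / 2 := by
    intro s
    rw [eq_div_iff two_ne_zero, mul_comm, ← mul_assoc, two_mul_sin_mul_sin]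
    congr 2 <;> push_cast <;> ring
  simp_rw [hprod, ← sum_div, sum_sub_distrib]
  rw [sum_range_cos_mul_pi_div l (2 * b + d) (by omega) (by omega)]
  rcases Nat.eq_zero_or_pos d with rfl | hd
  · simp
  · rw [sum_range_cos_mul_pi_div l d hd (by omega), if_neg (by omega), pow_add, pow_mul]
    simp

noncomputable def trigTerm (l N m s : ℕ) : ℝ :=
  cos (s * π / l) ^ N * sin (s * π / l) * sin (s * m * π / l)

noncomputable def trigSum (l N m : ℕ) : ℝ :=
  ∑ s ∈ range l, trigTerm l N m s

lemma trigSum_zero_right (l N : ℕ) : trigSum l N 0 = 0 := by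
  simp [trigSum, trigTerm]

lemma trigSum_self (l N : ℕ) : trigSum l N l = 0 := by
  refine sum_eq_zero fun s hs => ?_
  have hl : (l : ℝ) ≠ 0 := Nat.cast_ne_zero.2 (by rw [mem_range] at hs; omega)
  rw [trigTerm, show (s : ℝ) * l * π / l = s * π by field_simp, sin_nat_mul_pi, mul_zero]

lemma trigSum_succ_succ (l N m : ℕ) :
    trigSum l (N + 1) (m + 1) = (trigSum l N m + trigSum l N (m + 2)) / 2 := by
  simp only [trigSum, ← sum_add_distrib, sum_div]
  refine sum_congr rfl fun s _ => ?_
  have h₁ : (s : ℝ) * (m + 1 : ℕ) * π / l = s * m * π / l + s * π / l := by push_cast; ring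
  have h₂ : (s : ℝ) * (m + 2 : ℕ) * π / l = s * m * π / l + 2 * (s * π / l) := by push_cast; ring
  simp only [trigTerm]
  rw [h₁, h₂, sin_add, sin_add, sin_two_mul, cos_two_mul, pow_succ]
  ring

lemma trigSum_zero_left (l m : ℕ) (hm : 0 < m) (hml : m < l) :
    trigSum l 0 m = if m = 1 then (l : ℝ) / 2 else 0 := by
  convert sum_range_sin_mul_sin l 1 m one_pos (by omega) hm hml using 1
  · simp [trigSum, trigTerm]
  · simp [eq_comm]

lemma p_eq_trigSum (l : ℕ) (hl : 3 ≤ l) (N k : ℕ) (hk : k ≤ l - 2) :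
    (p l N k : ℝ) = 2 ^ (N + 1) / l * trigSum l N (k + 1) := by
  induction N generalizing k with
  | zero =>
    rw [trigSum_zero_left l (k + 1) k.succ_pos (by omega), p]
    rcases k with _ | k
    · have : (l : ℝ) ≠ 0 := by positivity
      simp only [↓reduceIte, Nat.cast_one, zero_add, pow_one]
      field_simp
    · simp
  | succ N ih =>
    rw [trigSum_succ_succ]
    by_cases htop : k + 2 = l
    · rw [p, if_pos htop, if_pos hl, htop, trigSum_self, ih _ (by omega),
        show l - 3 + 1 = k by omega]
      ring
    · rcases k with _ | k
      · rw [p, if_neg htop, if_pos rfl, trigSum_zero_right, ih 1 (by omega)]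
        ring
      · rw [p, if_neg htop, if_neg k.succ_ne_zero, Nat.add_sub_cancel, Nat.cast_add, ih k (by omega),
          ih (k + 2) (by omega)]
        ring

lemma trigTerm_sub_left (l N m s : ℕ) (hs : s ≤ l) :
    trigTerm l N m (l - s) = (-1) ^ (N + m + 1) * trigTerm l N m s := by
  rcases Nat.eq_zero_or_pos l with rfl | hl₀
  · simp [trigTerm]
  have hl : (l : ℝ) ≠ 0 := by positivity
  have h₁ : ((l - s : ℕ) : ℝ) * π / l = π - s * π / l := by push_cast [hs]; field_simp
  have h₂ : ((l - s : ℕ) : ℝ) * m * π / l = m * π - s * m * π / l := by push_cast [hs]; field_simp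
  rw [trigTerm, trigTerm, h₁, h₂, cos_pi_sub, sin_pi_sub, sin_nat_mul_pi_sub]
  ring

lemma trigSum_eq_add_sum_Ico (l N m : ℕ) (hl : 3 ≤ l) :
    trigSum l N m = (1 + (-1) ^ (N + m + 1)) * trigTerm l N m 1
      + ∑ s ∈ Ico 2 (l - 1), trigTerm l N m s := by
  have hrange : range l = insert 0 (insert 1 (insert (l - 1) (Ico 2 (l - 1)))) := by
    ext s; simp only [mem_range, mem_insert, mem_Ico]; omega
  rw [trigSum, hrange, sum_insert (by simp; omega), sum_insert (by simp; omega),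
    sum_insert (by simp), trigTerm_sub_left l N m 1 (by omega)]
  simp only [trigTerm, Nat.cast_zero, Nat.cast_one, zero_mul, zero_div, cos_zero, one_pow,
    sin_zero, mul_zero, one_mul, zero_add]
  ring

lemma abs_cos_le_cos_of_le_of_le_pi_sub {a x : ℝ} (ha : 0 ≤ a) (hax : a ≤ x) (hxa : x ≤ π - a) :
    |cos x| ≤ cos a := by
  rw [abs_le, neg_le, ← cos_pi_sub]
  exact ⟨cos_le_cos_of_nonneg_of_le_pi ha (by linarith) (by linarith),
    cos_le_cos_of_nonneg_of_le_pi ha (by linarith) hax⟩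

lemma abs_trigTerm_le (l N m s : ℕ) (hs : 2 ≤ s) (hsl : s + 2 ≤ l) :
    |trigTerm l N m s| ≤
      |cos (2 * π / l)| ^ N * ((sin (s * π / l) ^ 2 + sin (s * m * π / l) ^ 2) / 2) := by
  have hl : (0 : ℝ) < l := by exact_mod_cast (show 0 < l by omega)
  have hcos : |cos (s * π / l)| ≤ |cos (2 * π / l)| := by
    refine (abs_cos_le_cos_of_le_of_le_pi_sub (by positivity) ?_ ?_).trans (le_abs_self _)
    · gcongr
      exact_mod_cast hs
    · rw [le_sub_iff_add_le, ← add_div, div_le_iff₀ hl]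
      have : (s : ℝ) + 2 ≤ l := by exact_mod_cast hsl
      nlinarith [pi_pos]
  rw [trigTerm, mul_assoc, abs_mul, abs_pow]
  gcongr
  rw [abs_mul, le_div_iff₀ two_pos, ← sq_abs (sin (s * π / l)), ← sq_abs (sin (s * m * π / l))]
  nlinarith [two_mul_le_add_sq |sin (s * π / l)| |sin (s * m * π / l)|]

lemma abs_sum_Ico_trigTerm_le (l N m : ℕ) (hm : 0 < m) (hml : m < l) :
    |∑ s ∈ Ico 2 (l - 1), trigTerm l N m s| ≤ |cos (2 * π / l)| ^ N * (l / 2) := by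
  have hsq (a : ℕ) (ha : 0 < a) (hal : a < l) : ∑ s ∈ range l, sin (s * a * π / l) ^ 2 = l / 2 := by
    simpa [sq] using sum_range_sin_mul_sin l a a ha hal ha hal
  calc |∑ s ∈ Ico 2 (l - 1), trigTerm l N m s|
      ≤ ∑ s ∈ Ico 2 (l - 1), |cos (2 * π / l)| ^ N *
          ((sin (s * π / l) ^ 2 + sin (s * m * π / l) ^ 2) / 2) := by
        refine (abs_sum_le_sum_abs _ _).trans (sum_le_sum fun s hs => ?_)
        rw [mem_Ico] at hs
        exact abs_trigTerm_le l N m s hs.1 (by omega)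
    _ ≤ ∑ s ∈ range l, |cos (2 * π / l)| ^ N *
          ((sin (s * π / l) ^ 2 + sin (s * m * π / l) ^ 2) / 2) := by
        refine sum_le_sum_of_subset_of_nonneg ?_ fun _ _ _ => by positivity
        intro s; simp only [mem_Ico, mem_range]; omega
    _ = |cos (2 * π / l)| ^ N * (l / 2) := by
        have hsq₁ : ∑ s ∈ range l, sin (s * π / l) ^ 2 = l / 2 := by
          simpa using hsq 1 one_pos (by omega)
        rw [← mul_sum, ← sum_div, sum_add_distrib, hsq m hm hml, hsq₁]
        ring

theorem stmt_18_general (l : ℕ) (hl : 3 ≤ l) (N k : ℕ)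
    (hk : k ≤ l - 2) :
    |(p l N k : ℝ) -
        ((1 + (-1 : ℝ) ^ (k + N)) / l) * 2 ^ (N + 1) * Real.cos (Real.pi / l) ^ N *
          Real.sin (Real.pi / l) * Real.sin ((k + 1) * Real.pi / l)| ≤
      2 ^ N * |Real.cos (2 * Real.pi / l)| ^ N := by
  have hl₀ : (0 : ℝ) < l := by exact_mod_cast (show 0 < l by omega)
  have hterm : trigTerm l N (k + 1) 1 = cos (π / l) ^ N * sin (π / l) * sin ((k + 1) * π / l) := by
    simp [trigTerm]
  have hsign : (-1 : ℝ) ^ (N + (k + 1) + 1) = (-1) ^ (k + N) := by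
    rw [show N + (k + 1) + 1 = k + N + 2 by ring, pow_add, neg_one_sq, mul_one]
  rw [p_eq_trigSum l hl N k hk, trigSum_eq_add_sum_Ico l N (k + 1) hl, hterm, hsign]
  calc _ = |2 ^ (N + 1) / l * ∑ s ∈ Ico 2 (l - 1), trigTerm l N (k + 1) s| := by
        ring_nf
    _ = 2 ^ (N + 1) / l * |∑ s ∈ Ico 2 (l - 1), trigTerm l N (k + 1) s| := by
        rw [abs_mul, abs_of_pos (by positivity)]
    _ ≤ 2 ^ (N + 1) / l * (|cos (2 * π / l)| ^ N * (l / 2)) := by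
        gcongr
        exact abs_sum_Ico_trigTerm_le l N (k + 1) k.succ_pos (by omega)
    _ = 2 ^ N * |cos (2 * π / l)| ^ N := by
        field_simp
        ring

theorem stmt_18 (l : ℕ) (hl : 3 ≤ l) (hodd : Odd l) (N k : ℕ) (hN : 1 ≤ N)
    (hk : k ≤ l - 2) :
    |(p l N k : ℝ) -
        ((1 + (-1 : ℝ) ^ (k + N)) / l) * 2 ^ (N + 1) * Real.cos (Real.pi / l) ^ N *
          Real.sin (Real.pi / l) * Real.sin ((k + 1) * Real.pi / l)| ≤
      2 ^ N * |Real.cos (2 * Real.pi / l)| ^ N :=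
  stmt_18_general l hl N k hk
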